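/- Let A be a unital associative k-algebra and λ, μ ∈ k. Define W(a ⊗ b) = ab ⊗ 1 + λ·1 ⊗ ab − b ⊗ a, Z(a ⊗ b) = μ·ab ⊗ 1 + 1 ⊗ ab − b ⊗ a, and X(a ⊗ b) = ab ⊗ 1 + 1 ⊗ ab − b ⊗ a. Then the Yang–Baxter commutators vanish: [W,W,W] = 0, [Z,Z,Z] = 0, [W,X,X] = 0, and [X,X,Z] = 0. -/

import Mathlib

open TensorProduct

noncomputable def r12 (k V : Type*) [Field k] [AddCommGroup V] [Module k V]
    (R : V ⊗[k] V →ₗ[k] V ⊗[k] V) :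
    (V ⊗[k] V) ⊗[k] V →ₗ[k] (V ⊗[k] V) ⊗[k] V :=
  TensorProduct.map R LinearMap.id

noncomputable def r23 (k V : Type*) [Field k] [AddCommGroup V] [Module k V]
    (R : V ⊗[k] V →ₗ[k] V ⊗[k] V) :
    (V ⊗[k] V) ⊗[k] V →ₗ[k] (V ⊗[k] V) ⊗[k] V :=
  (TensorProduct.assoc k V V V).symm.toLinearMap ∘ₗ
    TensorProduct.map LinearMap.id R ∘ₗ (TensorProduct.assoc k V V V).toLinearMap

noncomputable def tau (k V : Type*) [Field k] [AddCommGroup V] [Module k V] :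
    V ⊗[k] V →ₗ[k] V ⊗[k] V :=
  (TensorProduct.comm k V V).toLinearMap

noncomputable def r13 (k V : Type*) [Field k] [AddCommGroup V] [Module k V]
    (R : V ⊗[k] V →ₗ[k] V ⊗[k] V) :
    (V ⊗[k] V) ⊗[k] V →ₗ[k] (V ⊗[k] V) ⊗[k] V :=
  r23 k V (tau k V) ∘ₗ r12 k V R ∘ₗ r23 k V (tau k V)

/-- The braid equation. -/
def IsBraid (k V : Type*) [Field k] [AddCommGroup V] [Module k V]
    (R : V ⊗[k] V →ₗ[k] V ⊗[k] V) : Prop :=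
  r12 k V R ∘ₗ r23 k V R ∘ₗ r12 k V R = r23 k V R ∘ₗ r12 k V R ∘ₗ r23 k V R

/-- The (constant) quantum Yang–Baxter equation. -/
def IsQYBE (k V : Type*) [Field k] [AddCommGroup V] [Module k V]
    (R : V ⊗[k] V →ₗ[k] V ⊗[k] V) : Prop :=
  r12 k V R ∘ₗ r13 k V R ∘ₗ r23 k V R = r23 k V R ∘ₗ r13 k V R ∘ₗ r12 k V R

/-- The Yang–Baxter commutator [R,S,T] = R¹² S¹³ T²³ − T²³ S¹³ R¹². -/
noncomputable def ybComm (k V : Type*) [Field k] [AddCommGroup V] [Module k V]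
    (R S T : V ⊗[k] V →ₗ[k] V ⊗[k] V) :
    (V ⊗[k] V) ⊗[k] V →ₗ[k] (V ⊗[k] V) ⊗[k] V :=
  r12 k V R ∘ₗ r13 k V S ∘ₗ r23 k V T - r23 k V T ∘ₗ r13 k V S ∘ₗ r12 k V R

/-!
`W`, `Z` and `X` are the members `(α, β) = (1, λ), (μ, 1), (1, 1)` of the two-parameter family
`a ⊗ b ↦ α • ab ⊗ 1 + β • 1 ⊗ ab - b ⊗ a`. For any three members of this family, expanding
`[R, S, T] (a ⊗ b ⊗ c)` leaves only five tensors, `1 ⊗ abc ⊗ 1`, `1 ⊗ bc ⊗ a`, `bc ⊗ 1 ⊗ a`,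
`c ⊗ 1 ⊗ ab` and `c ⊗ ab ⊗ 1`, with coefficients polynomial in the six parameters; these
coefficients vanish identically for the four parameter triples at hand.
-/

noncomputable def mulUnitFlip {k : Type*} (A : Type*) [Field k] [Ring A] [Algebra k A] (α β : k) :
    A ⊗[k] A →ₗ[k] A ⊗[k] A :=
  α • ((TensorProduct.mk k A A).flip 1 ∘ₗ LinearMap.mul' k A) +
    β • (TensorProduct.mk k A A 1 ∘ₗ LinearMap.mul' k A) - (TensorProduct.comm k A A).toLinearMap

section MulUnitFlip

variable {k A : Type*} [Field k] [Ring A] [Algebra k A]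

@[simp]
theorem mulUnitFlip_tmul (α β : k) (a b : A) :
    mulUnitFlip A α β (a ⊗ₜ b) = α • ((a * b) ⊗ₜ 1) + β • (1 ⊗ₜ (a * b)) - b ⊗ₜ a := by
  simp [mulUnitFlip]

theorem eq_mulUnitFlip {R : A ⊗[k] A →ₗ[k] A ⊗[k] A} {α β : k}
    (hR : ∀ a b : A, R (a ⊗ₜ b) = α • ((a * b) ⊗ₜ 1) + β • (1 ⊗ₜ (a * b)) - b ⊗ₜ a) :
    R = mulUnitFlip A α β :=
  TensorProduct.ext' fun a b => by rw [hR, mulUnitFlip_tmul]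

theorem r12_mulUnitFlip_tmul (α β : k) (a b c : A) :
    r12 k A (mulUnitFlip A α β) ((a ⊗ₜ b) ⊗ₜ c) =
      α • ((a * b) ⊗ₜ 1) ⊗ₜ c + β • (1 ⊗ₜ (a * b)) ⊗ₜ c - (b ⊗ₜ a) ⊗ₜ c := by
  simp [r12, TensorProduct.add_tmul, TensorProduct.sub_tmul, TensorProduct.smul_tmul']

theorem r23_mulUnitFlip_tmul (α β : k) (a b c : A) :
    r23 k A (mulUnitFlip A α β) ((a ⊗ₜ b) ⊗ₜ c) =
      α • (a ⊗ₜ (b * c)) ⊗ₜ 1 + β • (a ⊗ₜ 1) ⊗ₜ (b * c) - (a ⊗ₜ c) ⊗ₜ b := by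
  simp [r23, TensorProduct.tmul_add, TensorProduct.tmul_sub]

theorem r13_mulUnitFlip_tmul (α β : k) (a b c : A) :
    r13 k A (mulUnitFlip A α β) ((a ⊗ₜ b) ⊗ₜ c) =
      α • ((a * c) ⊗ₜ b) ⊗ₜ 1 + β • (1 ⊗ₜ b) ⊗ₜ (a * c) - (c ⊗ₜ b) ⊗ₜ a := by
  simp [r13, r23, tau, r12_mulUnitFlip_tmul]

theorem ybComm_mulUnitFlip_tmul (α₁ β₁ α₂ β₂ α₃ β₃ : k) (a b c : A) :
    ybComm k A (mulUnitFlip A α₁ β₁) (mulUnitFlip A α₂ β₂) (mulUnitFlip A α₃ β₃)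
        ((a ⊗ₜ b) ⊗ₜ c) =
      (α₂ * (β₁ * (α₃ - 1) + β₃ * (β₁ - 1)) - β₂ * (α₁ * (α₃ - 1) + α₃ * (β₁ - 1))) •
          (1 ⊗ₜ (a * b * c)) ⊗ₜ 1 +
        ((β₂ - 1) * (β₁ * α₃ - 1) - (β₁ - 1) * (β₃ - 1)) • (1 ⊗ₜ (b * c)) ⊗ₜ a +
        (α₃ * (α₁ - 1) * (β₂ - 1) - (α₁ - α₂) * (β₃ - 1)) • ((b * c) ⊗ₜ 1) ⊗ₜ a +
        ((α₁ - 1) * (β₃ - β₂) - β₁ * (α₂ - 1) * (β₃ - 1)) • (c ⊗ₜ 1) ⊗ₜ (a * b) +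
        ((α₁ - 1) * (α₃ - 1) - (α₂ - 1) * (β₁ * α₃ - 1)) • (c ⊗ₜ (a * b)) ⊗ₜ 1 := by
  simp only [ybComm, LinearMap.sub_apply, LinearMap.comp_apply, r23_mulUnitFlip_tmul,
    r13_mulUnitFlip_tmul, r12_mulUnitFlip_tmul, map_add, map_sub, map_smul, mul_one, one_mul,
    mul_assoc]
  module

theorem ybComm_mulUnitFlip_eq_zero {α₁ β₁ α₂ β₂ α₃ β₃ : k}
    (h₁ : α₂ * (β₁ * (α₃ - 1) + β₃ * (β₁ - 1)) = β₂ * (α₁ * (α₃ - 1) + α₃ * (β₁ - 1)))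
    (h₂ : (β₂ - 1) * (β₁ * α₃ - 1) = (β₁ - 1) * (β₃ - 1))
    (h₃ : α₃ * (α₁ - 1) * (β₂ - 1) = (α₁ - α₂) * (β₃ - 1))
    (h₄ : (α₁ - 1) * (β₃ - β₂) = β₁ * (α₂ - 1) * (β₃ - 1))
    (h₅ : (α₁ - 1) * (α₃ - 1) = (α₂ - 1) * (β₁ * α₃ - 1)) :
    ybComm k A (mulUnitFlip A α₁ β₁) (mulUnitFlip A α₂ β₂) (mulUnitFlip A α₃ β₃) = 0 :=
  TensorProduct.ext_threefold fun a b c => by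
    simp only [ybComm_mulUnitFlip_tmul, sub_eq_zero.mpr h₁, sub_eq_zero.mpr h₂, sub_eq_zero.mpr h₃,
      sub_eq_zero.mpr h₄, sub_eq_zero.mpr h₅, zero_smul, add_zero, LinearMap.zero_apply]

end MulUnitFlip

theorem wxz_system_of_algebra
    (k A : Type*) [Field k] [Ring A] [Algebra k A]
    (lam mu : k)
    (W Z X : A ⊗[k] A →ₗ[k] A ⊗[k] A)
    (hW : ∀ a b : A, W (a ⊗ₜ b) =
      (a * b) ⊗ₜ (1 : A) + lam • ((1 : A) ⊗ₜ (a * b)) - b ⊗ₜ a)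
    (hZ : ∀ a b : A, Z (a ⊗ₜ b) =
      mu • ((a * b) ⊗ₜ (1 : A)) + (1 : A) ⊗ₜ (a * b) - b ⊗ₜ a)
    (hX : ∀ a b : A, X (a ⊗ₜ b) =
      (a * b) ⊗ₜ (1 : A) + (1 : A) ⊗ₜ (a * b) - b ⊗ₜ a) :
    ybComm k A W W W = 0 ∧ ybComm k A Z Z Z = 0 ∧
      ybComm k A W X X = 0 ∧ ybComm k A X X Z = 0 := by
  obtain rfl : W = mulUnitFlip A 1 lam := eq_mulUnitFlip fun a b => by rw [hW, one_smul]
  obtain rfl : Z = mulUnitFlip A mu 1 := eq_mulUnitFlip fun a b => by rw [hZ, one_smul]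
  obtain rfl : X = mulUnitFlip A 1 1 := eq_mulUnitFlip fun a b => by rw [hX, one_smul, one_smul]
  refine ⟨?_, ?_, ?_, ?_⟩ <;> apply ybComm_mulUnitFlip_eq_zero <;> ring
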